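/- Let S ⊆ {1,…,d} be both irreducible and closed (i.e. ⌊S⌋ = S and ⌈S⌉ = S). Then every subset T ⊆ S is both irreducible and closed. -/

import Mathlib

/-- Vertex type: `some i` is the feature vertex `i`, `none` is the target vertex `Y`. -/
abbrev Vtx (d : ℕ) := Option (Fin d)

/-- `PathTo E j p` means `p` is a directed path in the graph with edge relation `E`
from the feature vertex `j` to the target vertex `Y` (encoded as `none`). -/
def PathTo {d : ℕ} (E : Vtx d → Vtx d → Prop) (j : Fin d) (p : List (Vtx d)) : Prop :=
  p.Chain' E ∧ p.head? = some (some j) ∧ p.getLast? = some none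

open Classical in
/-- The basis `⌊S⌋` of `S`: all `j ∈ S` having a directed path to `Y`
whose only vertex in `S` is `j`. -/
noncomputable def bas {d : ℕ} (E : Vtx d → Vtx d → Prop) (S : Finset (Fin d)) :
    Finset (Fin d) :=
  S.filter fun j => ∃ p : List (Vtx d), PathTo E j p ∧ ∀ i ∈ S, some i ∈ p → i = j

open Classical in
/-- The closure `⌈S⌉` of `S`: all `j ∈ {1,…,d}` such that every directed path
from `j` to `Y` contains a vertex of `S`. -/
noncomputable def clos {d : ℕ} (E : Vtx d → Vtx d → Prop) (S : Finset (Fin d)) :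
    Finset (Fin d) :=
  Finset.univ.filter fun j => ∀ p : List (Vtx d), PathTo E j p → ∃ i ∈ S, some i ∈ p

/-
A vertex `j` of the basis of `S` has a path to `Y` meeting `S` only in `j`.
Hence for `T ⊆ S`, the same path witnesses `j ∈ ⌊T⌋` when `j ∈ T`, and shows `j ∉ ⌈T⌉`
when `j ∉ T`. Since the closure is monotone, `⌈T⌉ ⊆ ⌈S⌉ = S = ⌊S⌋`, so `⌈T⌉ ⊆ T`.
-/

namespace PathTo

variable {d : ℕ} {E : Vtx d → Vtx d → Prop}

theorem head_mem {j : Fin d} {p : List (Vtx d)} (hp : PathTo E j p) : some j ∈ p :=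
  List.mem_of_mem_head? hp.2.1

end PathTo

section BasisClosure

variable {d : ℕ} {E : Vtx d → Vtx d → Prop} {S T : Finset (Fin d)}

theorem mem_bas_iff {j : Fin d} :
    j ∈ bas E S ↔ j ∈ S ∧ ∃ p, PathTo E j p ∧ ∀ i ∈ S, some i ∈ p → i = j := by
  classical
  simp only [bas, Finset.mem_filter]

theorem mem_clos_iff {j : Fin d} :
    j ∈ clos E S ↔ ∀ p, PathTo E j p → ∃ i ∈ S, some i ∈ p := by
  classical
  simp only [clos, Finset.mem_filter, Finset.mem_univ, true_and]

theorem bas_subset : bas E S ⊆ S :=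
  fun _ hj => (mem_bas_iff.1 hj).1

theorem subset_clos : S ⊆ clos E S :=
  fun j hj => mem_clos_iff.2 fun _ hp => ⟨j, hj, hp.head_mem⟩

theorem clos_mono (hTS : T ⊆ S) : clos E T ⊆ clos E S := fun _ hj =>
  mem_clos_iff.2 fun p hp =>
    let ⟨i, hiT, hip⟩ := mem_clos_iff.1 hj p hp
    ⟨i, hTS hiT, hip⟩

theorem bas_eq_self_of_subset (hS : bas E S = S) (hTS : T ⊆ S) : bas E T = T := by
  refine Finset.Subset.antisymm bas_subset fun j hjT => ?_
  obtain ⟨-, p, hp, honly⟩ := mem_bas_iff.1 (hS.symm ▸ hTS hjT)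
  exact mem_bas_iff.2 ⟨hjT, p, hp, fun i hiT => honly i (hTS hiT)⟩

theorem mem_of_mem_clos_of_mem_bas (hTS : T ⊆ S) {j : Fin d}
    (hjT : j ∈ clos E T) (hjS : j ∈ bas E S) : j ∈ T := by
  obtain ⟨-, p, hp, honly⟩ := mem_bas_iff.1 hjS
  obtain ⟨i, hiT, hip⟩ := mem_clos_iff.1 hjT p hp
  exact honly i (hTS hiT) hip ▸ hiT

end BasisClosure

theorem stmt9_general (d : ℕ) (E : Vtx d → Vtx d → Prop)
    (S : Finset (Fin d)) (h1 : bas E S = S) (h2 : clos E S = S)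
    (T : Finset (Fin d)) (hT : T ⊆ S) :
    bas E T = T ∧ clos E T = T := by
  refine ⟨bas_eq_self_of_subset h1 hT, Finset.Subset.antisymm (fun j hj => ?_) subset_clos⟩
  have hjS : j ∈ bas E S := by
    rw [h1, ← h2]
    exact clos_mono hT hj
  exact mem_of_mem_clos_of_mem_bas hT hj hjS

/-- Every subset of a simple (irreducible and closed) set is irreducible and closed. -/
theorem stmt9 (d : ℕ) (E : Vtx d → Vtx d → Prop)
    (hacyc : ∀ v : Vtx d, ¬ Relation.TransGen E v v)
    (hY : ∀ v : Vtx d, ¬ E none v)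
    (S : Finset (Fin d)) (h1 : bas E S = S) (h2 : clos E S = S)
    (T : Finset (Fin d)) (hT : T ⊆ S) :
    bas E T = T ∧ clos E T = T :=
  stmt9_general d E S h1 h2 T hT
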